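/- arXiv:1708.04679 — 5 statements merged into one kernel-verified Lean document; each statement's English description precedes it below -/
import Mathlib

section
/- Let D be a graded division algebra, V a finite-dimensional graded right D-module with graded flag F : 0 = V_0 ⊂ V_1 ⊂ ⋯ ⊂ V_r = V, and R = End_D F. Then for each i, every R-module endomorphism f of V_i (V_i viewed as a left R-module) is given by right multiplication by some element d ∈ D; i.e., End_R V_i ≅ D. -/
open MulOpposite

/-- A grading of a ring `D` by a group `G`. -/
structure RingGrading (G D : Type*) [Group G] [DecidableEq G] [Ring D] where
  comp : G → AddSubgroup D
  decomp : DirectSum.Decomposition comp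
  mul_mem : ∀ {g h : G} {a b : D}, a ∈ comp g → b ∈ comp h → a * b ∈ comp (g * h)
  one_mem : (1 : D) ∈ comp 1

/-- A graded ring is a graded division ring if every nonzero homogeneous element
is invertible. -/
def RingGrading.IsDivision {G D : Type*} [Group G] [DecidableEq G] [Ring D]
    (𝒟 : RingGrading G D) : Prop :=
  ∀ (g : G) (a : D), a ∈ 𝒟.comp g → a ≠ 0 → IsUnit a

/-- A grading of a right `D`-module `V` (modelled as a `Dᵐᵒᵖ`-module) compatible with
the grading `𝒟` of `D`. -/
structure ModuleGrading (G : Type*) [Group G] [DecidableEq G] {D : Type*} [Ring D]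
    (𝒟 : RingGrading G D) (V : Type*) [AddCommGroup V] [Module Dᵐᵒᵖ V] where
  comp : G → AddSubgroup V
  decomp : DirectSum.Decomposition comp
  smul_mem : ∀ {g h : G} {v : V} {d : D}, v ∈ comp g → d ∈ 𝒟.comp h → (op d) • v ∈ comp (g * h)

variable {G : Type*} [Group G] [DecidableEq G] {D : Type*} [Ring D] {𝒟 : RingGrading G D}
  {V : Type*} [AddCommGroup V] [Module Dᵐᵒᵖ V]

/-- A `D`-submodule `W` is homogeneous if it is the (direct) sum of its intersections
with the homogeneous components. -/
def ModuleGrading.IsHomog (𝒱 : ModuleGrading G 𝒟 V) (W : Submodule Dᵐᵒᵖ V) : Prop :=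
  W.toAddSubgroup = ⨆ g : G, (W.toAddSubgroup ⊓ 𝒱.comp g)

/-- A graded flag `0 = V₀ ⊂ V₁ ⊂ ⋯ ⊂ V_r = V` of homogeneous `D`-submodules of `V`
(the chain is constant equal to `⊤` from index `r` on). -/
structure GradedFlag (𝒱 : ModuleGrading G 𝒟 V) (r : ℕ) where
  mem : ℕ → Submodule Dᵐᵒᵖ V
  bot : mem 0 = ⊥
  strict : ∀ i < r, mem i < mem (i + 1)
  stable : ∀ i, r ≤ i → mem i = ⊤
  homog : ∀ i, 𝒱.IsHomog (mem i)

/-- The ring `End_D 𝓕` of `D`-linear endomorphisms of `V` preserving each member of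
the flag `F`, as a subring of `End_D V`. -/
def GradedFlag.flagEnd {𝒱 : ModuleGrading G 𝒟 V} {r : ℕ} (F : GradedFlag 𝒱 r) :
    Subring (Module.End Dᵐᵒᵖ V) where
  carrier := {f | ∀ i, ∀ v ∈ F.mem i, f v ∈ F.mem i}
  zero_mem' := by intro i v hv; simp
  one_mem' := by intro i v hv; simpa using hv
  add_mem' := by
    intro a b ha hb i v hv
    simpa [LinearMap.add_apply] using (F.mem i).add_mem (ha i v hv) (hb i v hv)
  neg_mem' := by
    intro a ha i v hv
    simpa [LinearMap.neg_apply] using (F.mem i).neg_mem (ha i v hv)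
  mul_mem' := by intro a b ha hb i v hv; exact ha i _ (hb i v hv)

/-- The degree-`τ` homogeneous component of `End_D V`: endomorphisms mapping `V_g`
into `V_{τg}` for every `g`. -/
def ModuleGrading.endComp (𝒱 : ModuleGrading G 𝒟 V) (τ : G) :
    AddSubgroup (Module.End Dᵐᵒᵖ V) where
  carrier := {f | ∀ (g : G), ∀ v ∈ 𝒱.comp g, f v ∈ 𝒱.comp (τ * g)}
  zero_mem' := by intro g v hv; simpa using (𝒱.comp _).zero_mem
  add_mem' := by
    intro a b ha hb g v hv
    simpa [LinearMap.add_apply] using (𝒱.comp _).add_mem (ha g v hv) (hb g v hv)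
  neg_mem' := by
    intro a ha g v hv
    simpa [LinearMap.neg_apply] using (𝒱.comp _).neg_mem (ha g v hv)

/-! Let `V_k` be the largest member of the flag not containing `V_i`, and pick a homogeneous
`u ∈ V_i \ V_k`. Over a graded division ring a nonzero homogeneous `u` is torsion-free, and a
Zorn argument over homogeneous submodules (a homogeneous element outside `uD ⊕ P` can always be
adjoined to `P`) extends `V_k` to a complement `P` of `uD`. This yields a functional `φ` with
`φ u = 1` vanishing on `V_k`. For `v ∈ V_i` the rank-one map `x ↦ v φ(x)` preserves the flag,
since each `V_j` either contains `V_i` or lies in `V_k`; commuting `f` past it gives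
`f v = f (v φ(u)) = v φ(f u)`. -/

open DirectSum

theorem DirectSum.exists_decompose_ne_zero {ι σ M : Type*} [DecidableEq ι] [AddCommMonoid M]
    [SetLike σ M] [AddSubmonoidClass σ M] (ℳ : ι → σ) [Decomposition ℳ] {m : M} (hm : m ≠ 0) :
    ∃ i, (decompose ℳ m i : M) ≠ 0 := by
  by_contra! hall
  exact hm ((decompose ℳ).injective (DFinsupp.ext fun i => Subtype.ext (by simpa using hall i)))

namespace Submodule.IsHomogeneous

variable {ι σ R M : Type*} [DecidableEq ι] [Semiring R] [AddCommMonoid M] [Module R M]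
  [SetLike σ M] [AddSubmonoidClass σ M] {ℳ : ι → σ} [Decomposition ℳ]

variable (ℳ) in
theorem bot : (⊥ : Submodule R M).IsHomogeneous ℳ := by
  intro i m hm
  simp [(Submodule.mem_bot R).mp hm]

variable (ℳ) in
theorem top : (⊤ : Submodule R M).IsHomogeneous ℳ :=
  fun _ _ _ => trivial

theorem sup {p q : Submodule R M} (hp : p.IsHomogeneous ℳ) (hq : q.IsHomogeneous ℳ) :
    (p ⊔ q).IsHomogeneous ℳ := by
  intro i m hm
  obtain ⟨y, hy, z, hz, rfl⟩ := Submodule.mem_sup.mp hm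
  rw [decompose_add, DirectSum.add_apply, AddMemClass.coe_add]
  exact add_mem (Submodule.mem_sup_left (hp i hy)) (Submodule.mem_sup_right (hq i hz))

theorem sSup_of_directedOn {S : Set (Submodule R M)} (hne : S.Nonempty)
    (hdir : DirectedOn (· ≤ ·) S) (hS : ∀ p ∈ S, p.IsHomogeneous ℳ) :
    (sSup S).IsHomogeneous ℳ := by
  intro i m hm
  obtain ⟨p, hpS, hmp⟩ := (Submodule.mem_sSup_of_directed hne hdir).mp hm
  exact le_sSup hpS (hS p hpS i hmp)

theorem exists_mem_notMem_of_not_le {p q : Submodule R M} (hp : p.IsHomogeneous ℳ)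
    (hq : q.IsHomogeneous ℳ) (hpq : ¬ p ≤ q) : ∃ i, ∃ m ∈ ℳ i, m ∈ p ∧ m ∉ q := by
  obtain ⟨m, hmp, hmq⟩ := SetLike.not_le_iff_exists.mp hpq
  obtain ⟨i, hi⟩ := not_forall.mp (mt (hq.mem_iff ℳ).mpr hmq)
  exact ⟨i, _, (decompose ℳ m i).2, hp i hmp, hi⟩

end Submodule.IsHomogeneous

theorem Submodule.exists_linearMap_apply_eq_one_of_isCompl {R M : Type*} [Ring R]
    [AddCommGroup M] [Module R M] {u : M}
    (hu : Function.Injective (LinearMap.toSpanSingleton R M u)) {P : Submodule R M}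
    (h : IsCompl (R ∙ u) P) : ∃ φ : M →ₗ[R] R, φ u = 1 ∧ P ≤ LinearMap.ker φ := by
  let e : R ≃ₗ[R] (R ∙ u) := (LinearEquiv.ofInjective _ hu).trans
    (LinearEquiv.ofEq _ _ (LinearMap.span_singleton_eq_range R M u).symm)
  refine ⟨e.symm ∘ₗ projectionOnto _ P h, ?_, fun x hx => ?_⟩
  · rw [LinearMap.comp_apply, projectionOnto_apply_of_mem_left h (mem_span_singleton_self u),
      LinearEquiv.coe_coe, LinearEquiv.symm_apply_eq]
    ext
    simp [e]
  · simpa using hx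

instance RingGrading.instDecomposition (𝒟 : RingGrading G D) : Decomposition 𝒟.comp :=
  𝒟.decomp

instance ModuleGrading.instDecomposition (𝒱 : ModuleGrading G 𝒟 V) : Decomposition 𝒱.comp :=
  𝒱.decomp

namespace ModuleGrading

variable {𝒱 : ModuleGrading G 𝒟 V}

theorem decompose_smul_of_mem {x : V} {g : G} (hx : x ∈ 𝒱.comp g) (c : D) (h : G) :
    (decompose 𝒱.comp (op c • x) (g * h) : V) = op (decompose 𝒟.comp c h : D) • x := by
  induction c using Decomposition.inductionOn 𝒟.comp with
  | zero => simp
  | @homogeneous k c =>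
    by_cases hkh : k = h
    · subst hkh
      rw [decompose_of_mem_same _ c.2, decompose_of_mem_same _ (𝒱.smul_mem hx c.2)]
    · rw [decompose_of_mem_ne _ c.2 hkh,
        decompose_of_mem_ne _ (𝒱.smul_mem hx c.2) (fun h' => hkh (mul_left_cancel h'))]
      simp
  | add a b ha hb => simp [add_smul, ha, hb]

theorem IsHomog.isHomogeneous {W : Submodule Dᵐᵒᵖ V} (hW : 𝒱.IsHomog W) :
    W.IsHomogeneous 𝒱.comp := by
  intro g v hv
  change v ∈ W.toAddSubgroup at hv
  rw [hW] at hv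
  refine AddSubgroup.iSup_induction (C := fun v => (decompose 𝒱.comp v g : V) ∈ W) _ hv
    (fun k w hw => ?_) (by simp) (fun v w hv hw => by simpa using W.add_mem hv hw)
  obtain ⟨hwW, hwk⟩ := AddSubgroup.mem_inf.mp hw
  by_cases hkg : k = g
  · subst hkg; rwa [decompose_of_mem_same 𝒱.comp hwk]
  · rw [decompose_of_mem_ne 𝒱.comp hwk hkg]; exact W.zero_mem

theorem isHomogeneous_span_singleton {x : V} {g : G} (hx : x ∈ 𝒱.comp g) :
    (Dᵐᵒᵖ ∙ x).IsHomogeneous 𝒱.comp := by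
  intro k v hv
  obtain ⟨t, rfl⟩ := Submodule.mem_span_singleton.mp hv
  rw [← op_unop t, show k = g * (g⁻¹ * k) by group, decompose_smul_of_mem hx]
  exact Submodule.smul_mem _ _ (Submodule.mem_span_singleton_self x)

theorem mem_of_smul_mem (hdiv : 𝒟.IsDivision) {M : Submodule Dᵐᵒᵖ V}
    (hM : M.IsHomogeneous 𝒱.comp) {x : V} {g : G} (hx : x ∈ 𝒱.comp g) {t : Dᵐᵒᵖ} (ht : t ≠ 0)
    (htx : t • x ∈ M) : x ∈ M := by
  obtain ⟨h, hh⟩ := exists_decompose_ne_zero 𝒟.comp ((unop_ne_zero_iff t).mpr ht)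
  obtain ⟨a, ha⟩ := hdiv h _ (decompose 𝒟.comp t.unop h).2 hh
  have hax : op (a : D) • x ∈ M := by
    rw [ha, ← decompose_smul_of_mem hx]
    exact hM _ htx
  simpa [smul_smul, ← op_mul] using M.smul_mem (op (a⁻¹ : Dˣ).val) hax

theorem disjoint_span_singleton_of_notMem (hdiv : 𝒟.IsDivision) {M : Submodule Dᵐᵒᵖ V}
    (hM : M.IsHomogeneous 𝒱.comp) {x : V} {g : G} (hx : x ∈ 𝒱.comp g) (hxM : x ∉ M) :
    Disjoint M (Dᵐᵒᵖ ∙ x) := by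
  rw [Submodule.disjoint_def]
  intro v hv hvx
  obtain ⟨t, rfl⟩ := Submodule.mem_span_singleton.mp hvx
  by_contra ht
  exact hxM (mem_of_smul_mem hdiv hM hx (fun h => ht (by rw [h, zero_smul])) hv)

theorem injective_toSpanSingleton (hdiv : 𝒟.IsDivision) {x : V} {g : G} (hx : x ∈ 𝒱.comp g)
    (hx0 : x ≠ 0) : Function.Injective (LinearMap.toSpanSingleton Dᵐᵒᵖ V x) := by
  rw [injective_iff_map_eq_zero]
  intro t ht
  by_contra ht0
  exact hx0 ((Submodule.mem_bot _).mp
    (mem_of_smul_mem hdiv (.bot 𝒱.comp) hx ht0 (by simpa using ht)))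

theorem exists_le_isCompl (hdiv : 𝒟.IsDivision) {M N : Submodule Dᵐᵒᵖ V}
    (hM : M.IsHomogeneous 𝒱.comp) (hN : N.IsHomogeneous 𝒱.comp) (hMN : Disjoint M N) :
    ∃ P, N ≤ P ∧ IsCompl M P := by
  obtain ⟨P, hNP, ⟨hP, hMP⟩, hmax⟩ := zorn_le_nonempty₀
    {P : Submodule Dᵐᵒᵖ V | P.IsHomogeneous 𝒱.comp ∧ Disjoint M P}
    (fun c hc hchain y hy => ⟨sSup c,
      ⟨.sSup_of_directedOn ⟨y, hy⟩ hchain.directedOn fun P hP => (hc hP).1,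
        hchain.directedOn.disjoint_sSup_right.mpr fun P hP => (hc hP).2⟩,
      fun _ => le_sSup⟩) N ⟨hN, hMN⟩
  refine ⟨P, hNP, hMP, codisjoint_iff_le_sup.mpr (by_contra fun hMP' => ?_)⟩
  obtain ⟨g, x, hx, -, hxMP⟩ := (Submodule.IsHomogeneous.top 𝒱.comp).exists_mem_notMem_of_not_le
    (hM.sup hP) hMP'
  have hPx : P ⊔ (Dᵐᵒᵖ ∙ x) ≤ P := hmax
    ⟨hP.sup (isHomogeneous_span_singleton hx), hMP.disjoint_sup_right_of_disjoint_sup_left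
      (disjoint_span_singleton_of_notMem hdiv (hM.sup hP) hx hxMP)⟩ le_sup_left
  exact hxMP (Submodule.mem_sup_right (hPx (Submodule.mem_sup_right
    (Submodule.mem_span_singleton_self x))))

theorem exists_linearMap_apply_eq_one_of_notMem (hdiv : 𝒟.IsDivision) {N : Submodule Dᵐᵒᵖ V}
    (hN : N.IsHomogeneous 𝒱.comp) {u : V} {g : G} (hu : u ∈ 𝒱.comp g) (huN : u ∉ N) :
    ∃ φ : V →ₗ[Dᵐᵒᵖ] Dᵐᵒᵖ, φ u = 1 ∧ N ≤ LinearMap.ker φ := by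
  obtain ⟨P, hNP, huP⟩ := exists_le_isCompl hdiv (isHomogeneous_span_singleton hu) hN
    (disjoint_span_singleton_of_notMem hdiv hN hu huN).symm
  obtain ⟨φ, hφu, hφP⟩ := Submodule.exists_linearMap_apply_eq_one_of_isCompl
    (injective_toSpanSingleton hdiv hu fun hu0 => huN (hu0 ▸ N.zero_mem)) huP
  exact ⟨φ, hφu, hNP.trans hφP⟩

end ModuleGrading

namespace GradedFlag

variable {𝒱 : ModuleGrading G 𝒟 V} {r : ℕ} (F : GradedFlag 𝒱 r)

theorem monotone_mem : Monotone F.mem := by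
  refine monotone_nat_of_le_succ fun n => ?_
  rcases lt_or_ge n r with h | h
  · exact (F.strict n h).le
  · rw [F.stable n h, F.stable (n + 1) (h.trans n.le_succ)]

theorem exists_greatest_not_ge {i : ℕ} (hi : F.mem i ≠ ⊥) :
    ∃ k, ¬ F.mem i ≤ F.mem k ∧ ∀ j, ¬ F.mem i ≤ F.mem j → F.mem j ≤ F.mem k := by
  set S := {j | ¬ F.mem i ≤ F.mem j}
  have hne : S.Nonempty := ⟨0, show ¬ F.mem i ≤ F.mem 0 by rwa [F.bot, le_bot_iff]⟩
  have hbdd : BddAbove S := ⟨i, fun j hj => le_of_not_ge fun hij => hj (F.monotone_mem hij)⟩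
  exact ⟨sSup S, Nat.sSup_mem hne hbdd, fun j hj => F.monotone_mem (le_csSup hbdd hj)⟩

theorem smulRight_mem_flagEnd {i : ℕ} {v : V} (hv : v ∈ F.mem i) (φ : V →ₗ[Dᵐᵒᵖ] Dᵐᵒᵖ)
    (hφ : ∀ j, ¬ F.mem i ≤ F.mem j → F.mem j ≤ LinearMap.ker φ) :
    φ.smulRight v ∈ F.flagEnd := by
  intro j x hx
  by_cases hij : F.mem i ≤ F.mem j
  · exact hij ((F.mem i).smul_mem _ hv)
  · simp [LinearMap.mem_ker.mp (hφ j hij hx)]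

end GradedFlag

theorem flag_member_R_endomorphism_is_scalar_general
    (hdiv : 𝒟.IsDivision)
    {𝒱 : ModuleGrading G 𝒟 V} {r : ℕ} (F : GradedFlag 𝒱 r)
    (i : ℕ) (f : V →+ V)
    (hf2 : ∀ a ∈ F.flagEnd, ∀ v ∈ F.mem i, f (a v) = a (f v)) :
    ∃ d : D, ∀ v ∈ F.mem i, f v = (op d) • v := by
  rcases eq_or_ne (F.mem i) ⊥ with hbot | hbot
  · exact ⟨0, fun v hv => by simp [(Submodule.mem_bot _).mp (hbot ▸ hv)]⟩
  have hhom j : (F.mem j).IsHomogeneous 𝒱.comp := (F.homog j).isHomogeneous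
  obtain ⟨k, hik, hk⟩ := F.exists_greatest_not_ge hbot
  obtain ⟨g, u, hug, hui, huk⟩ := (hhom i).exists_mem_notMem_of_not_le (hhom k) hik
  obtain ⟨φ, hφu, hkφ⟩ :=
    ModuleGrading.exists_linearMap_apply_eq_one_of_notMem hdiv (hhom k) hug huk
  refine ⟨(φ (f u)).unop, fun v hv => ?_⟩
  have hφv : φ.smulRight v ∈ F.flagEnd :=
    F.smulRight_mem_flagEnd hv φ fun j hj => (hk j hj).trans hkφ
  calc f v = f (φ.smulRight v u) := by rw [LinearMap.smulRight_apply, hφu, one_smul]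
    _ = φ.smulRight v (f u) := hf2 _ hφv u hui
    _ = op (φ (f u)).unop • v := by rw [op_unop, LinearMap.smulRight_apply]

/-- every `R`-module endomorphism of `V_i` (where `R = End_D 𝓕`)
is given by right multiplication by some `d ∈ D`, i.e. `End_R V_i ≅ D`. -/
theorem flag_member_R_endomorphism_is_scalar
    (hdiv : 𝒟.IsDivision) [Module.Finite Dᵐᵒᵖ V]
    {𝒱 : ModuleGrading G 𝒟 V} {r : ℕ} (F : GradedFlag 𝒱 r)
    (i : ℕ) (f : V →+ V)
    (hf1 : ∀ v ∈ F.mem i, f v ∈ F.mem i)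
    (hf2 : ∀ a ∈ F.flagEnd, ∀ v ∈ F.mem i, f (a v) = a (f v)) :
    ∃ d : D, ∀ v ∈ F.mem i, f v = (op d) • v :=
  flag_member_R_endomorphism_is_scalar_general hdiv F i f hf2
end

section
/- Let D be a graded division algebra, F : 0 = V_0 ⊂ V_1 ⊂ ⋯ ⊂ V_r = V a graded flag on a finite-dimensional graded right D-module V, and R = End_D F. If e ∈ R is an idempotent with e(V) = V_1, then R decomposes as a direct sum of left ideals R = Re ⊕ R(1−e), the subring R_1 = Re is isomorphic (via restriction r ↦ r|_{V_1}) to End_D V_1, and R(1−e) is a two-sided ideal equal to the annihilator in R of V_1. -/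
open MulOpposite

variable {G : Type*} [Group G] [DecidableEq G] {D : Type*} [Ring D] {𝒟 : RingGrading G D}
  {V : Type*} [AddCommGroup V] [Module Dᵐᵒᵖ V]

/-- if `e ∈ R = End_D 𝓕` is an idempotent with `e(V) = V₁`, then
`R = Re ⊕ R(1-e)` as left ideals, `Re` is isomorphic via restriction to `End_D V₁`,
and `R(1-e)` is a two-sided ideal equal to the annihilator of `V₁` in `R`. -/
theorem flagEnd_decomposition
    (hdiv : 𝒟.IsDivision) [Module.Finite Dᵐᵒᵖ V]
    {𝒱 : ModuleGrading G 𝒟 V} {r : ℕ} (F : GradedFlag 𝒱 r) (hr : 0 < r)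
    (e : Module.End Dᵐᵒᵖ V) (he : e ∈ F.flagEnd) (hee : e * e = e)
    (hrange : LinearMap.range e = F.mem 1) :
    -- R = Re + R(1-e)
    (∀ x ∈ F.flagEnd, ∃ a ∈ F.flagEnd, ∃ b ∈ F.flagEnd, x = a * e + b * (1 - e)) ∧
    -- the sum is direct: Re ∩ R(1-e) = 0
    (∀ a ∈ F.flagEnd, ∀ b ∈ F.flagEnd, a * e = b * (1 - e) → a * e = 0) ∧
    -- restriction to V₁ is injective on Re
    (∀ a ∈ F.flagEnd, (∀ v ∈ F.mem 1, (a * e) v = 0) → a * e = 0) ∧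
    -- every D-endomorphism of V₁ is the restriction of an element of Re
    (∀ f : F.mem 1 →ₗ[Dᵐᵒᵖ] F.mem 1, ∃ a ∈ F.flagEnd,
      ∀ v : F.mem 1, (a * e) (v : V) = (f v : V)) ∧
    -- R(1-e) is a right ideal (hence two-sided)
    (∀ a ∈ F.flagEnd, ∀ b ∈ F.flagEnd, ∃ t ∈ F.flagEnd, (a * (1 - e)) * b = t * (1 - e)) ∧
    -- R(1-e) is the annihilator of V₁ in R
    (∀ x ∈ F.flagEnd, ((∃ a ∈ F.flagEnd, x = a * (1 - e)) ↔ ∀ v ∈ F.mem 1, x v = 0)) := by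
  
  -- basic facts
  have hmemrange : ∀ w : V, e w ∈ F.mem 1 := fun w => hrange ▸ LinearMap.mem_range_self e w
  have hfix : ∀ v ∈ F.mem 1, e v = v := by
    intro v hv
    rw [← hrange] at hv
    obtain ⟨w, rfl⟩ := hv
    calc e (e w) = (e * e) w := rfl
    _ = e w := by rw [hee]
  have hstep : ∀ i, F.mem i ≤ F.mem (i + 1) := by
    intro i
    by_cases h : i < r
    · exact (F.strict i h).le
    · rw [F.stable (i+1) (le_trans (le_of_not_gt h) (Nat.le_succ i))]; exact le_top
  have hmono : ∀ n, F.mem 1 ≤ F.mem (n + 1) := by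
    intro n
    induction n with
    | zero => exact le_rfl
    | succ k ih => exact le_trans ih (hstep (k+1))
  -- x vanishing on V₁ satisfies x = x (1 - e)
  have hann : ∀ x : Module.End Dᵐᵒᵖ V, (∀ v ∈ F.mem 1, x v = 0) → x = x * (1 - e) := by
    intro x hx
    have : x * e = 0 := by
      ext w; exact hx (e w) (hmemrange w)
    rw [mul_sub, mul_one, this, sub_zero]
  refine ⟨?_, ?_, ?_, ?_, ?_, ?_⟩
  · intro x hx
    exact ⟨x, hx, x, hx, by rw [← mul_add]; simp⟩
  · intro a ha b hb hab
    have : a * e = (a * e) * e := by rw [mul_assoc, hee]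
    rw [this, hab, mul_assoc, sub_mul, one_mul, hee, sub_self, mul_zero]
  · intro a ha hv
    have h1 : a * e = (a * e) * e := by rw [mul_assoc, hee]
    ext w
    rw [h1]
    exact hv (e w) (hmemrange w)
  · intro f
    set a : Module.End Dᵐᵒᵖ V :=
      (F.mem 1).subtype ∘ₗ f ∘ₗ (e.codRestrict (F.mem 1) hmemrange) with ha
    have haR : a ∈ F.flagEnd := by
      intro i v hv
      match i with
      | 0 =>
        rw [F.bot] at hv ⊢
        rw [Submodule.mem_bot] at hv
        subst hv
        simp
      | (n+1) =>
        exact hmono n (f (e.codRestrict (F.mem 1) hmemrange v)).2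
    refine ⟨a, haR, ?_⟩
    intro v
    have : (a * e) (v : V) = a (e v) := rfl
    rw [this, hfix v v.2]
    show ((f (e.codRestrict (F.mem 1) hmemrange (v : V))) : V) = _
    congr 2
    ext
    exact hfix v v.2
  · intro a ha b hb
    refine ⟨(a * (1 - e)) * b, ?_, ?_⟩
    · exact Subring.mul_mem _ (Subring.mul_mem _ ha (Subring.sub_mem _ (Subring.one_mem _) he)) hb
    · refine hann _ ?_
      intro v hv
      have hbv : b v ∈ F.mem 1 := hb 1 v hv
      show a ((1 - e) (b v)) = 0
      have : (1 - e) (b v) = b v - e (b v) := rfl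
      rw [this, hfix _ hbv, sub_self, map_zero]
  · intro x hx
    constructor
    · rintro ⟨a, ha, rfl⟩ v hv
      show a ((1 - e) v) = 0
      have : (1 - e) v = v - e v := rfl
      rw [this, hfix v hv, sub_self, map_zero]
    · intro h
      exact ⟨x, hx, hann x h⟩
end

section
/- Let K be an algebraically closed field and R = M_n(K) with a grading by a group G. The following are equivalent: (1) dim R_g ≤ 1 for all g ∈ G; (2) dim R_e = 1, where e is the identity of G; (3) R is a graded division algebra (every nonzero homogeneous element is invertible). -/
/-!
Suppose the identity component is the line `K • 1` and `a ∈ ℬ g` is nonzero. The `r` with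
`(x * r * y)₁ = 0` for all `x, y` form a two-sided ideal not containing `1`, hence zero by
simplicity; as it does not contain `a`, some homogeneous `x * a * y` of degree `1` is nonzero, i.e.
`x * a * y = c • 1` with `c ≠ 0`. This is a one-sided and hence (Dedekind finiteness) two-sided
inverse of `a`. Conversely, in a division grading the inverse of `a ∈ ℬ g` lies in `ℬ g⁻¹`, and for
`c ∈ ℬ 1` and `μ` in the spectrum of `c` the homogeneous non-unit `μ • 1 - c` must vanish, so
`ℬ 1 = K • 1` and every `c ∈ ℬ g` equals `(c * a⁻¹) * a ∈ K • a`.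
-/

open DirectSum Module

theorem Submodule.exists_eq_algebraMap_of_forall_isUnit {K A : Type*} [Field K] [IsAlgClosed K]
    [Ring A] [Algebra K A] [FiniteDimensional K A] [Nontrivial A] {B : Submodule K A}
    (hone : (1 : A) ∈ B) (hdiv : ∀ a ∈ B, a ≠ 0 → IsUnit a) {c : A} (hc : c ∈ B) :
    ∃ μ : K, c = algebraMap K A μ := by
  obtain ⟨μ, hμ⟩ := spectrum.nonempty_of_isAlgClosed_of_finiteDimensional K c
  refine ⟨μ, (sub_eq_zero.mp ?_).symm⟩
  by_contra hne
  refine spectrum.mem_iff.mp hμ (hdiv _ (sub_mem ?_ hc) hne)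
  rw [Algebra.algebraMap_eq_smul_one]
  exact Submodule.smul_mem _ _ hone

namespace GroupGrading

variable {K A G : Type*} [Field K] [Ring A] [Algebra K A] [Group G] [DecidableEq G]
  {ℬ : G → Submodule K A} [Decomposition ℬ]

theorem coe_decompose_mul_of_left_mem
    (hmul : ∀ (g h : G) (a b : A), a ∈ ℬ g → b ∈ ℬ h → a * b ∈ ℬ (g * h))
    {g : G} {a : A} (ha : a ∈ ℬ g) (b : A) (h : G) :
    (decompose ℬ (a * b) (g * h) : A) = a * decompose ℬ b h := by
  induction b using Decomposition.inductionOn ℬ with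
  | zero => simp
  | @homogeneous k b =>
    by_cases hkh : k = h
    · subst hkh
      rw [decompose_of_mem_same ℬ (hmul _ _ _ _ ha b.2), decompose_of_mem_same ℬ b.2]
    · rw [decompose_of_mem_ne ℬ (hmul _ _ _ _ ha b.2) (by simpa using hkh),
        decompose_of_mem_ne ℬ b.2 hkh, mul_zero]
  | add b b' hb hb' => simp only [mul_add, decompose_add, DirectSum.add_apply,
      Submodule.coe_add, hb, hb']

theorem exists_mem_mul_eq_one_of_isUnit
    (hmul : ∀ (g h : G) (a b : A), a ∈ ℬ g → b ∈ ℬ h → a * b ∈ ℬ (g * h))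
    (hone : (1 : A) ∈ ℬ 1) {g : G} {a : A} (ha : a ∈ ℬ g) (hu : IsUnit a) :
    ∃ b ∈ ℬ g⁻¹, b * a = 1 := by
  obtain ⟨u, rfl⟩ := hu
  refine ⟨decompose ℬ (↑u⁻¹ : A) g⁻¹, Submodule.coe_mem _, ?_⟩
  have hub : (u : A) * decompose ℬ (↑u⁻¹ : A) g⁻¹ = 1 := by
    rw [← coe_decompose_mul_of_left_mem hmul ha, Units.mul_inv, mul_inv_cancel,
      decompose_of_mem_same ℬ hone]
  rw [← Units.inv_eq_of_mul_eq_one_right hub, Units.inv_mul]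

theorem finrank_le_one_of_forall_isUnit [IsAlgClosed K] [FiniteDimensional K A] [Nontrivial A]
    (hmul : ∀ (g h : G) (a b : A), a ∈ ℬ g → b ∈ ℬ h → a * b ∈ ℬ (g * h))
    (hone : (1 : A) ∈ ℬ 1) (hdiv : ∀ (g : G) (a : A), a ∈ ℬ g → a ≠ 0 → IsUnit a) (g : G) :
    finrank K (ℬ g) ≤ 1 := by
  by_cases hbot : ℬ g = ⊥
  · rw [hbot, finrank_bot]
    exact zero_le_one
  obtain ⟨a, ha, ha0⟩ := Submodule.exists_mem_ne_zero_of_ne_bot hbot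
  obtain ⟨b, hb, hba⟩ := exists_mem_mul_eq_one_of_isUnit hmul hone ha (hdiv g a ha ha0)
  refine finrank_le_one ⟨a, ha⟩ fun ⟨c, hc⟩ => ?_
  have hcb : c * b ∈ ℬ 1 := by simpa using hmul _ _ _ _ hc hb
  obtain ⟨μ, hμ⟩ := Submodule.exists_eq_algebraMap_of_forall_isUnit hone (hdiv 1) hcb
  refine ⟨μ, Subtype.ext ?_⟩
  calc μ • a = (c * b) * a := by rw [hμ, Algebra.smul_def]
    _ = c := by rw [mul_assoc, hba, mul_one]

theorem coe_decompose_mul_mul_one_eq_zero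
    (hmul : ∀ (g h : G) (a b : A), a ∈ ℬ g → b ∈ ℬ h → a * b ∈ ℬ (g * h))
    {g : G} {a : A} (ha : a ∈ ℬ g)
    (h0 : ∀ (h k : G) (x y : A), x ∈ ℬ h → y ∈ ℬ k → h * g * k = 1 → x * a * y = 0)
    (x y : A) : (decompose ℬ (x * a * y) 1 : A) = 0 := by
  induction x using Decomposition.inductionOn ℬ with
  | zero => simp
  | @homogeneous h x =>
    induction y using Decomposition.inductionOn ℬ with
    | zero => simp
    | @homogeneous k y =>
      have hmem : (x : A) * a * y ∈ ℬ (h * g * k) := hmul _ _ _ _ (hmul _ _ _ _ x.2 ha) y.2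
      by_cases hhgk : h * g * k = 1
      · rw [h0 h k x y x.2 y.2 hhgk, decompose_zero, DirectSum.zero_apply, ZeroMemClass.coe_zero]
      · exact decompose_of_mem_ne ℬ hmem hhgk
    | add y y' hy hy' =>
      simp only [mul_add, decompose_add, DirectSum.add_apply, Submodule.coe_add, hy, hy', add_zero]
  | add x x' hx hx' =>
    simp only [add_mul, decompose_add, DirectSum.add_apply, Submodule.coe_add, hx, hx', add_zero]

theorem exists_mem_mul_mul_ne_zero [IsSimpleRing A]
    (hmul : ∀ (g h : G) (a b : A), a ∈ ℬ g → b ∈ ℬ h → a * b ∈ ℬ (g * h))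
    (hone : (1 : A) ∈ ℬ 1) {g : G} {a : A} (ha : a ∈ ℬ g) (ha0 : a ≠ 0) :
    ∃ (h k : G) (x y : A), x ∈ ℬ h ∧ y ∈ ℬ k ∧ h * g * k = 1 ∧ x * a * y ≠ 0 := by
  by_contra! h0
  let I : TwoSidedIdeal A := .mk' {r | ∀ x y : A, (decompose ℬ (x * r * y) 1 : A) = 0}
    (by simp) (fun hr hs x y => by simp [mul_add, add_mul, hr x y, hs x y])
    (fun hr x y => by rw [← neg_mul_comm]; exact hr (-x) y)
    (fun hr x y => by simpa [mul_assoc] using hr (x * _) y)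
    (fun hr x y => by simpa [mul_assoc] using hr x (_ * y))
  have haI : a ∈ I := (TwoSidedIdeal.mem_mk' _ _ _ _ _ _ a).mpr
    (coe_decompose_mul_mul_one_eq_zero hmul ha h0)
  rcases eq_bot_or_eq_top I with hI | hI
  · exact ha0 (by simpa [hI] using haI)
  · have h1 : (1 : A) ∈ I := hI ▸ trivial
    have := (TwoSidedIdeal.mem_mk' _ _ _ _ _ _ 1).mp h1 1 1
    rw [mul_one, mul_one, decompose_of_mem_same ℬ hone] at this
    exact one_ne_zero this

theorem isUnit_of_finrank_eq_one [IsSimpleRing A] [IsDedekindFiniteMonoid A]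
    (hmul : ∀ (g h : G) (a b : A), a ∈ ℬ g → b ∈ ℬ h → a * b ∈ ℬ (g * h))
    (hone : (1 : A) ∈ ℬ 1) (h1 : finrank K (ℬ 1) = 1) {g : G} {a : A} (ha : a ∈ ℬ g)
    (ha0 : a ≠ 0) : IsUnit a := by
  obtain ⟨h, k, x, y, hx, hy, hhgk, hxay⟩ := exists_mem_mul_mul_ne_zero hmul hone ha ha0
  have hmem : x * a * y ∈ ℬ 1 := hhgk ▸ hmul _ _ _ _ (hmul _ _ _ _ hx ha) hy
  obtain ⟨c, hc⟩ := (finrank_eq_one_iff_of_nonzero' (⟨1, hone⟩ : ℬ 1)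
    (fun h => one_ne_zero (congrArg Subtype.val h))).mp h1 ⟨_, hmem⟩
  replace hc : c • 1 = x * a * y := congrArg Subtype.val hc
  have hc0 : c ≠ 0 := by
    rintro rfl
    exact hxay (by rw [← hc, zero_smul])
  refine IsUnit.of_mul_eq_one (y * (c⁻¹ • x)) (mul_assoc a y _ ▸ mul_eq_one_comm.mp ?_)
  rw [smul_mul_assoc, ← mul_assoc, ← hc, smul_smul, inv_mul_cancel₀ hc0, one_smul]

end GroupGrading

/-- For a grading by a group `G` on a matrix algebra over an
algebraically closed field, the following are equivalent: all homogeneous components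
have dimension at most one; the identity component has dimension one; the grading is
a division grading. -/
theorem fine_grading_tfae
    {K : Type*} [Field K] [IsAlgClosed K] {G : Type*} [Group G] [DecidableEq G]
    {t : ℕ} (ht : 0 < t)
    (ℬ : G → Submodule K (Matrix (Fin t) (Fin t) K)) [DirectSum.Decomposition ℬ]
    (hmul : ∀ (g h : G) (a b : Matrix (Fin t) (Fin t) K),
      a ∈ ℬ g → b ∈ ℬ h → a * b ∈ ℬ (g * h))
    (hone : (1 : Matrix (Fin t) (Fin t) K) ∈ ℬ 1) :
    List.TFAE
      [∀ g : G, Module.finrank K (ℬ g) ≤ 1,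
       Module.finrank K (ℬ (1 : G)) = 1,
       ∀ (g : G) (a : Matrix (Fin t) (Fin t) K), a ∈ ℬ g → a ≠ 0 → IsUnit a] := by
  have : Nonempty (Fin t) := ⟨⟨0, ht⟩⟩
  tfae_have 1 → 2 := fun h => (h 1).antisymm <|
    (finrank_span_singleton one_ne_zero).symm.le.trans
      (Submodule.finrank_mono ((Submodule.span_singleton_le_iff_mem _ _).mpr hone))
  tfae_have 2 → 3 := fun h g a => GroupGrading.isUnit_of_finrank_eq_one hmul hone h
  tfae_have 3 → 1 := GroupGrading.finrank_le_one_of_forall_isUnit hmul hone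
  tfae_finish
end

section
/- Let G be a group, D a G-graded division algebra over a field K, p = (p_1,…,p_s) a tuple of positive integers with n = p_1+⋯+p_s, and g = (g_1,…,g_n) ∈ G^n. Equip the tensor product UT(p_1,…,p_s) ⊗_K D with the G-grading in which e_{ij} ⊗ d is homogeneous of degree g_i (deg d) g_j^{-1} for homogeneous d ∈ D. Then UT(p_1,…,p_s) ⊗_K D is isomorphic as a G-graded algebra to A(D, p, g) = End_D F(D, p, g). -/
open MulOpposite

variable {G : Type*} [Group G] [DecidableEq G] {D : Type*} [Ring D]

/-- The degree-`h` component of the graded right `D`-module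
`V(D, n, g) = ⊕ᵢ ^{[gᵢ]}D` (modelled as `Fin n → D`): the vectors whose `i`-th
coordinate is homogeneous of degree `gᵢ⁻¹ h`. -/
def stdGrading (𝒟 : RingGrading G D) {n : ℕ} (g : Fin n → G) (h : G) :
    AddSubgroup (Fin n → D) where
  carrier := {v | ∀ i, v i ∈ 𝒟.comp ((g i)⁻¹ * h)}
  zero_mem' := fun _ => (𝒟.comp _).zero_mem
  add_mem' := fun ha hb i => (𝒟.comp _).add_mem (ha i) (hb i)
  neg_mem' := fun ha i => (𝒟.comp _).neg_mem (ha i)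

/-- `blockStart m i = m₁ + ⋯ + mᵢ`, the dimension of the `i`-th member of the flag
determined by the tuple `m`. -/
def blockStart (m : List ℕ) (i : ℕ) : ℕ := (m.take i).sum

/-- The `i`-th member of the flag `𝓕(D, m, g)`: vectors supported in the first
`m₁ + ⋯ + mᵢ` coordinates. -/
def stdFlagMem (m : List ℕ) {n : ℕ} (i : ℕ) : Submodule Dᵐᵒᵖ (Fin n → D) where
  carrier := {v | ∀ j : Fin n, blockStart m i ≤ (j : ℕ) → v j = 0}
  zero_mem' := fun j _ => rfl
  add_mem' := by intro a b ha hb j hj; simp [ha j hj, hb j hj]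
  smul_mem' := by intro c v hv j hj; simp [hv j hj]

/-- The algebra `𝒜(D, m, g) = End_D 𝓕(D, m, g)` of endomorphisms preserving each
member of the flag, as a subring of `End_D (Fin n → D)`. -/
def stdFlagEnd (m : List ℕ) {n : ℕ} : Subring (Module.End Dᵐᵒᵖ (Fin n → D)) where
  carrier := {f | ∀ i, ∀ v ∈ stdFlagMem (D := D) m (n := n) i, f v ∈ stdFlagMem (D := D) m i}
  zero_mem' := by intro i v hv; simp
  one_mem' := by intro i v hv; simpa using hv
  add_mem' := by
    intro a b ha hb i v hv
    simpa [LinearMap.add_apply] using (stdFlagMem (D := D) m i).add_mem (ha i v hv) (hb i v hv)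
  neg_mem' := by
    intro a ha i v hv
    simpa [LinearMap.neg_apply] using (stdFlagMem (D := D) m i).neg_mem (ha i v hv)
  mul_mem' := by intro a b ha hb i v hv; exact ha i _ (hb i v hv)

/-- The degree-`τ` homogeneous component of `End_D V(D, n, g)`. -/
def stdEndComp (𝒟 : RingGrading G D) {n : ℕ} (g : Fin n → G) (τ : G) :
    AddSubgroup (Module.End Dᵐᵒᵖ (Fin n → D)) where
  carrier := {f | ∀ (h : G), ∀ v ∈ stdGrading 𝒟 g h, f v ∈ stdGrading 𝒟 g (τ * h)}
  zero_mem' := by intro h v hv; simpa using (stdGrading 𝒟 g _).zero_mem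
  add_mem' := by
    intro a b ha hb h v hv
    simpa [LinearMap.add_apply] using (stdGrading 𝒟 g _).add_mem (ha h v hv) (hb h v hv)
  neg_mem' := by
    intro a ha h v hv
    simpa [LinearMap.neg_apply] using (stdGrading 𝒟 g _).neg_mem (ha h v hv)

/-- `σ ∈ S_{m₁} × ⋯ × S_{m_s}`: the permutation `σ` preserves each consecutive block
of indices of sizes `m₁, …, m_s`. -/
def IsBlockPerm (m : List ℕ) {n : ℕ} (σ : Equiv.Perm (Fin n)) : Prop :=
  ∀ (i : ℕ) (j : Fin n), blockStart m i ≤ (j : ℕ) → (j : ℕ) < blockStart m (i + 1) →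
    blockStart m i ≤ (σ j : ℕ) ∧ (σ j : ℕ) < blockStart m (i + 1)

/-- The support of a grading. -/
def RingGrading.supp (𝒟 : RingGrading G D) : Set G := {g : G | 𝒟.comp g ≠ ⊥}


/-- The upper block triangular matrix algebra `UT(p₁, …, p_s)` with block sizes given
by the list `p`, as a subalgebra of `Matrix (Fin n) (Fin n) K`: the entry `A i j` must
vanish whenever the block of `i` is strictly below the block of `j`. -/
def UTBlock (K : Type*) [Field K] (p : List ℕ) {n : ℕ} :
    Subalgebra K (Matrix (Fin n) (Fin n) K) where
  carrier := {A | ∀ i j : Fin n,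
    (∃ k, (j : ℕ) < blockStart p k ∧ blockStart p k ≤ (i : ℕ)) → A i j = 0}
  zero_mem' := by intro i j _; rfl
  one_mem' := by
    rintro i j ⟨k, hj, hi⟩
    have hij : i ≠ j := by intro h; subst h; omega
    simp [Matrix.one_apply, hij]
  add_mem' := by
    intro a b ha hb i j h
    simp [Matrix.add_apply, ha i j h, hb i j h]
  mul_mem' := by
    rintro a b ha hb i j ⟨k, hj, hi⟩
    have : ∀ l : Fin n, a i l * b l j = 0 := by
      intro l
      rcases lt_or_ge (l : ℕ) (blockStart p k) with h | h
      · rw [ha i l ⟨k, h, hi⟩, zero_mul]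
      · rw [hb l j ⟨k, hj, h⟩, mul_zero]
    simp [Matrix.mul_apply, this]
  algebraMap_mem' := by
    rintro c i j ⟨k, hj, hi⟩
    have hij : i ≠ j := by intro h; subst h; omega
    simp [Matrix.algebraMap_matrix_apply, hij]

set_option synthInstance.maxHeartbeats 1000000 in
open TensorProduct in
/-- The degree-`h` component of the grading on `UT(p₁,…,p_s) ⊗ D` in which
`e_{ij} ⊗ d` is homogeneous of degree `gᵢ (deg d) gⱼ⁻¹`. -/
noncomputable def tensorComp (K : Type*) [Field K] [Algebra K D] (𝒟 : RingGrading G D)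
    (p : List ℕ) {n : ℕ} (g : Fin n → G) (h : G) :
    AddSubgroup (↥(UTBlock K p (n := n)) ⊗[K] D) :=
  AddSubgroup.closure {x | ∃ (i j : Fin n)
    (hij : Matrix.single i j (1 : K) ∈ UTBlock K p (n := n)) (d : D) (k : G),
    d ∈ 𝒟.comp k ∧ g i * k * (g j)⁻¹ = h ∧
    x = (⟨Matrix.single i j (1 : K), hij⟩ : UTBlock K p (n := n)) ⊗ₜ[K] d}

/-! Both sides are realised inside `Matrix n n D`. Left multiplication on columns identifies
`Matrix n n D` with `End_D(Dⁿ)`, and `UT ⊗_K D` embeds into `Matrix n n K ⊗_K D ≅ Matrix n n D`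
because `D` is flat over the field `K`. The image consists of the matrices vanishing below the
diagonal blocks, which are exactly the endomorphisms preserving the flag. A matrix is
homogeneous of degree `h` for the grading of `End_D(Dⁿ)` iff its `(i, j)` entry has degree
`gᵢ⁻¹ h gⱼ`, and `e_{ij} ⊗ d` with `deg d = gᵢ⁻¹ h gⱼ` is exactly what the tensor grading puts
in degree `h`. -/

open TensorProduct

section MatrixEnd

variable (D) (ι : Type*) [Fintype ι] [DecidableEq ι]

def matrixEquivEnd : Matrix ι ι D ≃+* Module.End Dᵐᵒᵖ (ι → D) :=
  (RingEquiv.moduleEndSelfOp D).mapMatrix.trans (endVecRingEquivMatrixEnd ι Dᵐᵒᵖ D).symm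

variable {D ι}

theorem matrixEquivEnd_apply (M : Matrix ι ι D) (v : ι → D) (i : ι) :
    matrixEquivEnd D ι M v i = ∑ j, M i j * v j := rfl

theorem matrixEquivEnd_symm_apply (f : Module.End Dᵐᵒᵖ (ι → D)) (i j : ι) :
    (matrixEquivEnd D ι).symm f i j = f (Pi.single j 1) i := rfl

end MatrixEnd

section TensorMatrix

variable {K : Type*} [Field K] [Algebra K D] {ι : Type*} [Fintype ι] [DecidableEq ι]

noncomputable def subalgebraTensorToMatrix (S : Subalgebra K (Matrix ι ι K)) :
    S ⊗[K] D →ₐ[K] Matrix ι ι D :=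
  ((Algebra.TensorProduct.comm K (Matrix ι ι K) D).trans
    (matrixEquivTensor ι K D).symm).toAlgHom.comp
    (Algebra.TensorProduct.map S.val (AlgHom.id K D))

theorem subalgebraTensorToMatrix_tmul (S : Subalgebra K (Matrix ι ι K)) (A : S) (d : D)
    (i j : ι) : subalgebraTensorToMatrix S (A ⊗ₜ d) i j = (A : Matrix ι ι K) i j • d := by
  simp [subalgebraTensorToMatrix, Algebra.commutes, Algebra.smul_def]

theorem subalgebraTensorToMatrix_injective (S : Subalgebra K (Matrix ι ι K)) :
    Function.Injective (subalgebraTensorToMatrix (D := D) S) :=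
  ((Algebra.TensorProduct.comm K (Matrix ι ι K) D).trans
    (matrixEquivTensor ι K D).symm).injective.comp <|
    Module.Flat.rTensor_preserves_injective_linearMap S.val.toLinearMap Subtype.val_injective

end TensorMatrix

section BlockTriangular

variable {K : Type*} [Field K] {n : ℕ} (p : List ℕ)

def BlockBelow (i j : Fin n) : Prop :=
  ∃ k, (j : ℕ) < blockStart p k ∧ blockStart p k ≤ (i : ℕ)

variable {p}

theorem single_one_mem_UTBlock_iff {i j : Fin n} :
    Matrix.single i j (1 : K) ∈ UTBlock K p ↔ ¬ BlockBelow p i j := by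
  refine ⟨fun hA hij => one_ne_zero (α := K) (by simpa using hA i j hij),
    fun hij i' j' hij' => ?_⟩
  rw [Matrix.single_apply_of_ne]
  rintro ⟨rfl, rfl⟩
  exact hij hij'

variable (K p) in
open Classical in
noncomputable def utSingle (i j : Fin n) : UTBlock K p (n := n) :=
  if h : BlockBelow p i j then 0 else ⟨Matrix.single i j 1, single_one_mem_UTBlock_iff.2 h⟩

variable [Algebra K D]

theorem utSingle_apply_smul {M : Matrix (Fin n) (Fin n) D}
    (hM : ∀ i j, BlockBelow p i j → M i j = 0) (i j a b : Fin n) :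
    (utSingle K p i j : Matrix (Fin n) (Fin n) K) a b • M i j = Matrix.single i j (M i j) a b := by
  by_cases hij : BlockBelow p i j
  · simp [utSingle, hij, hM i j hij]
  · simp [utSingle, hij, Matrix.single_apply, ite_smul]

theorem subalgebraTensorToMatrix_UTBlock_apply_eq_zero (x : UTBlock K p ⊗[K] D) {i j : Fin n}
    (hij : BlockBelow p i j) : subalgebraTensorToMatrix (UTBlock K p) x i j = 0 := by
  induction x using TensorProduct.induction_on with
  | zero => simp
  | tmul A d => rw [subalgebraTensorToMatrix_tmul, A.2 i j hij, zero_smul]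
  | add x y hx hy => rw [map_add, Matrix.add_apply, hx, hy, add_zero]

theorem subalgebraTensorToMatrix_sum_utSingle {M : Matrix (Fin n) (Fin n) D}
    (hM : ∀ i j, BlockBelow p i j → M i j = 0) :
    subalgebraTensorToMatrix (UTBlock K p) (∑ i, ∑ j, utSingle K p i j ⊗ₜ M i j) = M := by
  ext a b
  conv_rhs => rw [Matrix.matrix_eq_sum_single M]
  simp only [map_sum, Matrix.sum_apply, subalgebraTensorToMatrix_tmul, utSingle_apply_smul hM]

theorem matrixEquivEnd_mem_stdFlagEnd_iff (M : Matrix (Fin n) (Fin n) D) :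
    matrixEquivEnd D _ M ∈ stdFlagEnd p ↔ ∀ i j, BlockBelow p i j → M i j = 0 := by
  constructor
  · rintro hM i j ⟨k, hj, hi⟩
    have hsingle : Pi.single j 1 ∈ stdFlagMem (D := D) p k := by
      intro l hl
      rw [Pi.single_eq_of_ne]
      rintro rfl
      omega
    simpa [← matrixEquivEnd_symm_apply] using hM k _ hsingle i hi
  · intro hM k v hv i hi
    rw [matrixEquivEnd_apply]
    refine Finset.sum_eq_zero fun l _ => ?_
    rcases lt_or_ge (l : ℕ) (blockStart p k) with hl | hl
    · rw [hM i l ⟨k, hl, hi⟩, zero_mul]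
    · rw [hv l hl, mul_zero]

end BlockTriangular

section Grading

variable {n : ℕ} (𝒟 : RingGrading G D) (g : Fin n → G)

theorem single_one_mem_stdGrading (j : Fin n) : Pi.single j 1 ∈ stdGrading 𝒟 g (g j) := by
  intro i
  rcases eq_or_ne i j with rfl | hij
  · rw [Pi.single_eq_same, inv_mul_cancel]
    exact 𝒟.one_mem
  · rw [Pi.single_eq_of_ne hij]
    exact zero_mem _

theorem matrixEquivEnd_mem_stdEndComp_iff (h : G) (M : Matrix (Fin n) (Fin n) D) :
    matrixEquivEnd D _ M ∈ stdEndComp 𝒟 g h ↔ ∀ i j, M i j ∈ 𝒟.comp ((g i)⁻¹ * h * g j) := by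
  constructor
  · intro hM i j
    have := hM _ _ (single_one_mem_stdGrading 𝒟 g j) i
    rwa [← matrixEquivEnd_symm_apply, RingEquiv.symm_apply_apply, ← mul_assoc] at this
  · intro hM h' v hv i
    rw [matrixEquivEnd_apply]
    refine sum_mem fun j _ => ?_
    have hdeg : (g i)⁻¹ * (h * h') = (g i)⁻¹ * h * g j * ((g j)⁻¹ * h') := by group
    rw [hdeg]
    exact 𝒟.mul_mem (hM i j) (hv j)

end Grading

section FlagEnd

variable {K : Type*} [Field K] [Algebra K D] {n : ℕ} (p : List ℕ)

variable (K) in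
noncomputable def utTensorToEnd : UTBlock K p (n := n) ⊗[K] D →+* Module.End Dᵐᵒᵖ (Fin n → D) :=
  (matrixEquivEnd D _).toRingHom.comp (subalgebraTensorToMatrix (UTBlock K p)).toRingHom

theorem utTensorToEnd_apply (x : UTBlock K p (n := n) ⊗[K] D) :
    utTensorToEnd K p x = matrixEquivEnd D _ (subalgebraTensorToMatrix (UTBlock K p) x) :=
  rfl

theorem utTensorToEnd_injective : Function.Injective (utTensorToEnd (D := D) K p (n := n)) :=
  (matrixEquivEnd D _).injective.comp (subalgebraTensorToMatrix_injective _)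

theorem utTensorToEnd_mem_stdFlagEnd (x : UTBlock K p (n := n) ⊗[K] D) :
    utTensorToEnd K p x ∈ stdFlagEnd p :=
  (matrixEquivEnd_mem_stdFlagEnd_iff _).2 fun _ _ hij =>
    subalgebraTensorToMatrix_UTBlock_apply_eq_zero x hij

theorem utTensorToEnd_sum_utSingle {f : Module.End Dᵐᵒᵖ (Fin n → D)} (hf : f ∈ stdFlagEnd p) :
    utTensorToEnd K p (∑ i, ∑ j, utSingle K p i j ⊗ₜ (matrixEquivEnd D _).symm f i j) = f := by
  rw [← RingEquiv.apply_symm_apply (matrixEquivEnd D _) f] at hf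
  rw [utTensorToEnd_apply, subalgebraTensorToMatrix_sum_utSingle
    ((matrixEquivEnd_mem_stdFlagEnd_iff _).1 hf), RingEquiv.apply_symm_apply]

variable (K) in
noncomputable def utTensorEquivFlagEnd :
    UTBlock K p (n := n) ⊗[K] D ≃+* stdFlagEnd (D := D) p (n := n) :=
  RingEquiv.ofBijective ((utTensorToEnd K p).codRestrict _ (utTensorToEnd_mem_stdFlagEnd p))
    ⟨fun _ _ hxy => utTensorToEnd_injective p (congrArg Subtype.val hxy),
      fun f => ⟨_, Subtype.ext (utTensorToEnd_sum_utSingle (K := K) p f.2)⟩⟩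

end FlagEnd

section GradedIso

variable {K : Type*} [Field K] [Algebra K D] {n : ℕ} (𝒟 : RingGrading G D) (p : List ℕ)
  (g : Fin n → G) (h : G)

theorem map_tensorComp_le :
    (tensorComp K 𝒟 p g h).map (utTensorEquivFlagEnd K p).toRingHom.toAddMonoidHom ≤
      (stdEndComp 𝒟 g h).comap (stdFlagEnd p).subtype.toAddMonoidHom := by
  rw [tensorComp, AddMonoidHom.map_closure, AddSubgroup.closure_le]
  rintro _ ⟨_, ⟨i, j, hij, d, k, hd, rfl, rfl⟩, rfl⟩
  refine (matrixEquivEnd_mem_stdEndComp_iff 𝒟 g _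
    (subalgebraTensorToMatrix (UTBlock K p) (⟨_, hij⟩ ⊗ₜ d))).2 fun a b => ?_
  simp only [subalgebraTensorToMatrix_tmul, Matrix.single_apply, ite_smul, one_smul, zero_smul]
  split_ifs with hab
  · obtain ⟨rfl, rfl⟩ := hab
    convert hd using 2
    group
  · exact zero_mem _

theorem comap_stdEndComp_le :
    (stdEndComp 𝒟 g h).comap (stdFlagEnd p).subtype.toAddMonoidHom ≤
      (tensorComp K 𝒟 p g h).map (utTensorEquivFlagEnd K p).toRingHom.toAddMonoidHom := by
  intro f hf
  have hdeg := (matrixEquivEnd_mem_stdEndComp_iff 𝒟 g h ((matrixEquivEnd D _).symm f)).1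
    (by simpa using hf)
  refine ⟨_, sum_mem fun i _ => sum_mem fun j _ => ?_,
    Subtype.ext (utTensorToEnd_sum_utSingle p f.2)⟩
  by_cases hij : BlockBelow p i j
  · simp [utSingle, hij]
  · exact AddSubgroup.subset_closure ⟨i, j, single_one_mem_UTBlock_iff.2 hij, _, _, hdeg i j,
      by group, by simp [utSingle, hij]⟩

end GradedIso

open TensorProduct in
theorem blockTriangular_tensor_iso_flagEnd_general
    {K : Type*} [Field K] [Algebra K D] (𝒟 : RingGrading G D)
    (p : List ℕ) (g : Fin p.sum → G) :
    ∃ ψ : (↥(UTBlock K p (n := p.sum)) ⊗[K] D) ≃+* ↥(stdFlagEnd (D := D) p (n := p.sum)),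
      ∀ h : G,
        AddSubgroup.map ψ.toRingHom.toAddMonoidHom (tensorComp K 𝒟 p g h) =
          AddSubgroup.comap ((stdFlagEnd (D := D) p (n := p.sum)).subtype).toAddMonoidHom
            (stdEndComp 𝒟 g h) :=
  ⟨utTensorEquivFlagEnd K p, fun h =>
    (map_tensorComp_le 𝒟 p g h).antisymm (comap_stdEndComp_le 𝒟 p g h)⟩

set_option synthInstance.maxHeartbeats 1000000 in
set_option maxHeartbeats 1000000 in
open TensorProduct in
/-- `UT(p₁,…,p_s) ⊗_K D`, graded so that `deg (e_{ij} ⊗ d) = gᵢ (deg d) gⱼ⁻¹`,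
is isomorphic as a `G`-graded algebra to `𝒜(D, p, g) = End_D 𝓕(D, p, g)`. -/
theorem blockTriangular_tensor_iso_flagEnd
    {K : Type*} [Field K] [Algebra K D] (𝒟 : RingGrading G D) (hdiv : 𝒟.IsDivision)
    (p : List ℕ) (hp : ∀ x ∈ p, 0 < x) (g : Fin p.sum → G) :
    ∃ ψ : (↥(UTBlock K p (n := p.sum)) ⊗[K] D) ≃+* ↥(stdFlagEnd (D := D) p (n := p.sum)),
      ∀ h : G,
        AddSubgroup.map ψ.toRingHom.toAddMonoidHom (tensorComp K 𝒟 p g h) =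
          AddSubgroup.comap ((stdFlagEnd (D := D) p (n := p.sum)).subtype).toAddMonoidHom
            (stdEndComp 𝒟 g h) :=
  blockTriangular_tensor_iso_flagEnd_general 𝒟 p g
end

section
/- Let R be a G-graded simple algebra (R² ≠ 0 and the only homogeneous two-sided ideals are 0 and R) possessing a minimal graded left ideal I. Then every graded simple left R-module V is isomorphic, as a graded R-module, to a shift I^{[g]} of I for some g ∈ G. -/
/-! The annihilator of `V` is a homogeneous two-sided ideal, proper because `RV ≠ 0`, so graded
simplicity of `R` makes `V` faithful. Hence some `a ∈ I` does not kill some homogeneous `w ∈ V_h`.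
The map `I → V, r ↦ r • w` sends degree `g` to degree `g * h`. Its image is a nonzero graded
submodule, hence all of `V`; its kernel is a graded left ideal inside `I` missing `a`, hence `0` by
minimality. So `r ↦ r • w` is a graded isomorphism `I^{[h]} ≅ V`. -/

open DirectSum

section Decomposition

variable {ι M : Type*} [DecidableEq ι] [AddCommGroup M] (ℳ : ι → AddSubgroup M) [Decomposition ℳ]

theorem AddSubgroup.isHomogeneous_iff_eq_iSup_inf {S : AddSubgroup M} :
    SetLike.IsHomogeneous ℳ S ↔ S = ⨆ i, S ⊓ ℳ i := by
  classical
  constructor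
  · intro hS
    refine le_antisymm (fun x hx => ?_) (iSup_le fun _ => inf_le_left)
    rw [← sum_support_decompose ℳ x]
    exact sum_mem fun i _ => AddSubgroup.mem_iSup_of_mem i ⟨hS i hx, (decompose ℳ x i).2⟩
  · intro hS i x hx
    rw [hS] at hx
    refine AddSubgroup.iSup_induction (C := fun y => (decompose ℳ y i : M) ∈ S) _ hx
      (fun j y hy => ?_) (by simp) (fun y z hy hz => ?_)
    · by_cases hji : j = i
      · subst hji
        rw [decompose_of_mem_same ℳ hy.2]
        exact hy.1
      · rw [decompose_of_mem_ne ℳ hy.2 hji]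
        exact zero_mem S
    · rw [decompose_add, DirectSum.add_apply, AddSubgroup.coe_add]
      exact add_mem hy hz

theorem exists_mem_smul_ne_zero_of_notMem_annihilator {R : Type*} [Ring R] [Module R M] {a : R}
    (ha : a ∉ Module.annihilator R M) : ∃ i, ∃ w ∈ ℳ i, a • w ≠ 0 := by
  contrapose! ha
  refine Module.mem_annihilator.mpr fun v => ?_
  induction v using Decomposition.inductionOn ℳ with
  | zero => exact smul_zero a
  | homogeneous w => exact ha _ w w.2
  | add v v' hv hv' => rw [smul_add, hv, hv', add_zero]

end Decomposition

section GradedModule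

variable {G : Type*} [Group G] [DecidableEq G] {R : Type*} [Ring R]
  {V : Type*} [AddCommGroup V] [Module R V]
  (ℛ : G → AddSubgroup R) [Decomposition ℛ] (𝒱 : G → AddSubgroup V) [Decomposition 𝒱]

theorem decompose_smul_of_mem
    (hsmul : ∀ (g h : G) (r : R) (v : V), r ∈ ℛ g → v ∈ 𝒱 h → r • v ∈ 𝒱 (g * h))
    {h : G} {w : V} (hw : w ∈ 𝒱 h) (r : R) (g : G) :
    (decompose 𝒱 (r • w) (g * h) : V) = (decompose ℛ r g : R) • w := by
  induction r using Decomposition.inductionOn ℛ with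
  | zero => simp
  | @homogeneous m r =>
    have hrw := hsmul m h r w r.2 hw
    by_cases hm : m = g
    · subst hm
      rw [decompose_of_mem_same 𝒱 hrw, decompose_of_mem_same ℛ r.2]
    · rw [decompose_of_mem_ne 𝒱 hrw ((mul_left_injective h).ne hm), decompose_of_mem_ne ℛ r.2 hm,
        zero_smul]
  | add x y hx hy =>
    simp only [add_smul, decompose_add, DirectSum.add_apply, AddSubgroup.coe_add, hx, hy]

theorem decompose_smul_eq_zero
    (hsmul : ∀ (g h : G) (r : R) (v : V), r ∈ ℛ g → v ∈ 𝒱 h → r • v ∈ 𝒱 (g * h))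
    {h : G} {w : V} (hw : w ∈ 𝒱 h) {r : R} (hr : r • w = 0) (g : G) :
    (decompose ℛ r g : R) • w = 0 := by
  rw [← decompose_smul_of_mem ℛ 𝒱 hsmul hw, hr]
  simp

theorem isHomogeneous_annihilator
    (hsmul : ∀ (g h : G) (r : R) (v : V), r ∈ ℛ g → v ∈ 𝒱 h → r • v ∈ 𝒱 (g * h)) :
    SetLike.IsHomogeneous ℛ (Module.annihilator R V) := by
  intro g r hr
  rw [Module.mem_annihilator] at hr ⊢
  intro v
  induction v using Decomposition.inductionOn 𝒱 with
  | zero => exact smul_zero _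
  | homogeneous w => exact decompose_smul_eq_zero ℛ 𝒱 hsmul w.2 (hr w) g
  | add v v' hv hv' => rw [smul_add, hv, hv', add_zero]

theorem isHomogeneous_ker_toSpanSingleton
    (hsmul : ∀ (g h : G) (r : R) (v : V), r ∈ ℛ g → v ∈ 𝒱 h → r • v ∈ 𝒱 (g * h))
    {h : G} {w : V} (hw : w ∈ 𝒱 h) :
    SetLike.IsHomogeneous ℛ (LinearMap.ker (LinearMap.toSpanSingleton R V w)) :=
  fun g _ hr => decompose_smul_eq_zero ℛ 𝒱 hsmul hw hr g

theorem isHomogeneous_map_toSpanSingleton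
    (hsmul : ∀ (g h : G) (r : R) (v : V), r ∈ ℛ g → v ∈ 𝒱 h → r • v ∈ 𝒱 (g * h))
    {h : G} {w : V} (hw : w ∈ 𝒱 h) {I : Submodule R R} (hI : SetLike.IsHomogeneous ℛ I) :
    SetLike.IsHomogeneous 𝒱 (I.map (LinearMap.toSpanSingleton R V w)) := by
  rintro g _ ⟨r, hr, rfl⟩
  refine ⟨_, hI (g * h⁻¹) hr, ?_⟩
  have hcomp := decompose_smul_of_mem ℛ 𝒱 hsmul hw r (g * h⁻¹)
  rw [inv_mul_cancel_right] at hcomp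
  exact hcomp.symm

theorem mem_of_smul_mem
    (hsmul : ∀ (g h : G) (r : R) (v : V), r ∈ ℛ g → v ∈ 𝒱 h → r • v ∈ 𝒱 (g * h))
    {h k : G} {w : V} (hw : w ∈ 𝒱 h) {I : Submodule R R} (hI : SetLike.IsHomogeneous ℛ I)
    (hinj : ∀ x ∈ I, x • w = 0 → x = 0) {r : R} (hr : r ∈ I) (hrw : r • w ∈ 𝒱 k) :
    r ∈ ℛ (k * h⁻¹) := by
  have hcomp : (decompose ℛ r (k * h⁻¹) : R) • w = r • w := by
    rw [← decompose_smul_of_mem ℛ 𝒱 hsmul hw, inv_mul_cancel_right, decompose_of_mem_same 𝒱 hrw]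
  have hdiff := hinj _ (sub_mem (hI _ hr) hr) (by rw [sub_smul, hcomp, sub_self])
  rw [← sub_eq_zero.mp hdiff]
  exact (decompose ℛ r _).2

theorem annihilator_eq_bot
    (hsmul : ∀ (g h : G) (r : R) (v : V), r ∈ ℛ g → v ∈ 𝒱 h → r • v ∈ 𝒱 (g * h))
    (hsimple : ∀ S : AddSubgroup R, (∀ r x, x ∈ S → r * x ∈ S) → (∀ r x, x ∈ S → x * r ∈ S) →
      S = ⨆ g : G, (S ⊓ ℛ g) → S = ⊥ ∨ S = ⊤)
    (hRV : ∃ (r : R) (v : V), r • v ≠ 0) :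
    Module.annihilator R V = ⊥ := by
  rcases hsimple (Module.annihilator R V).toAddSubgroup
    (fun r _ hx => Ideal.mul_mem_left _ r hx) (fun r _ hx => Ideal.mul_mem_right r _ hx)
    ((AddSubgroup.isHomogeneous_iff_eq_iSup_inf ℛ).mp (isHomogeneous_annihilator ℛ 𝒱 hsmul))
    with hbot | htop
  · exact Submodule.toAddSubgroup_injective hbot
  · obtain ⟨r, v, hrv⟩ := hRV
    have hr : r ∈ (Module.annihilator R V).toAddSubgroup := htop ▸ AddSubgroup.mem_top r
    exact absurd (Module.mem_annihilator.mp hr v) hrv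

theorem eq_zero_of_smul_eq_zero_of_isMinimal
    (hsmul : ∀ (g h : G) (r : R) (v : V), r ∈ ℛ g → v ∈ 𝒱 h → r • v ∈ 𝒱 (g * h))
    {I : Submodule R R} (hI : SetLike.IsHomogeneous ℛ I)
    (hImin : ∀ J : Submodule R R, SetLike.IsHomogeneous ℛ J → J ≤ I → J = ⊥ ∨ J = I)
    {h : G} {w : V} (hw : w ∈ 𝒱 h) {a : R} (haI : a ∈ I) (haw : a • w ≠ 0) :
    ∀ x ∈ I, x • w = 0 → x = 0 := by
  intro x hxI hxw
  have hK : SetLike.IsHomogeneous ℛ (I ⊓ LinearMap.ker (LinearMap.toSpanSingleton R V w)) :=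
    fun g _ hr => ⟨hI g hr.1, isHomogeneous_ker_toSpanSingleton ℛ 𝒱 hsmul hw g hr.2⟩
  rcases hImin _ hK inf_le_left with hbot | htop
  · have hx : x ∈ I ⊓ LinearMap.ker (LinearMap.toSpanSingleton R V w) := ⟨hxI, hxw⟩
    exact (Submodule.mem_bot R).mp (hbot ▸ hx)
  · exact absurd (htop.ge haI).2 haw

theorem map_toSpanSingleton_eq_top
    (hsmul : ∀ (g h : G) (r : R) (v : V), r ∈ ℛ g → v ∈ 𝒱 h → r • v ∈ 𝒱 (g * h))
    (hVsimple : ∀ U : Submodule R V, SetLike.IsHomogeneous 𝒱 U → U = ⊥ ∨ U = ⊤)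
    {I : Submodule R R} (hI : SetLike.IsHomogeneous ℛ I)
    {h : G} {w : V} (hw : w ∈ 𝒱 h) {a : R} (haI : a ∈ I) (haw : a • w ≠ 0) :
    I.map (LinearMap.toSpanSingleton R V w) = ⊤ := by
  refine (hVsimple _ (isHomogeneous_map_toSpanSingleton ℛ 𝒱 hsmul hw hI)).resolve_left
    fun hbot => ?_
  have haw_mem : a • w ∈ I.map (LinearMap.toSpanSingleton R V w) := ⟨a, haI, rfl⟩
  exact haw (by simpa [hbot] using haw_mem)

end GradedModule

theorem graded_simple_module_iso_shift_of_minimal_ideal_general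
    {G : Type*} [Group G] [DecidableEq G] {R : Type*} [Ring R]
    (ℛ : G → AddSubgroup R) [DirectSum.Decomposition ℛ]
    -- ... and the only homogeneous two-sided ideals are 0 and R
    (hsimple : ∀ S : AddSubgroup R, (∀ r x, x ∈ S → r * x ∈ S) → (∀ r x, x ∈ S → x * r ∈ S) →
      S = ⨆ g : G, (S ⊓ ℛ g) → S = ⊥ ∨ S = ⊤)
    -- I is a minimal graded left ideal
    (I : Submodule R R)
    (hIhom : I.toAddSubgroup = ⨆ g : G, (I.toAddSubgroup ⊓ ℛ g))
    (hIne : I ≠ ⊥)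
    (hImin : ∀ J : Submodule R R, J.toAddSubgroup = ⨆ g : G, (J.toAddSubgroup ⊓ ℛ g) →
      J ≤ I → J = ⊥ ∨ J = I)
    -- V is a graded left R-module
    {V : Type*} [AddCommGroup V] [Module R V]
    (𝒱 : G → AddSubgroup V) [DirectSum.Decomposition 𝒱]
    (hsmul : ∀ (g h : G) (r : R) (v : V), r ∈ ℛ g → v ∈ 𝒱 h → r • v ∈ 𝒱 (g * h))
    -- V is graded simple: RV ≠ 0 and no proper nonzero graded submodules
    (hRV : ∃ (r : R) (v : V), r • v ≠ 0)
    (hVsimple : ∀ U : Submodule R V, U.toAddSubgroup = ⨆ g : G, (U.toAddSubgroup ⊓ 𝒱 g) →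
      U = ⊥ ∨ U = ⊤) :
    -- conclusion: V ≅ I^{[g]} as graded R-modules for some g
    ∃ (g : G) (φ : V ≃ₗ[R] I),
      ∀ (k : G) (v : V), v ∈ 𝒱 k → (φ v : R) ∈ ℛ (k * g⁻¹) := by
  have hI : SetLike.IsHomogeneous ℛ I := (AddSubgroup.isHomogeneous_iff_eq_iSup_inf ℛ).mpr hIhom
  obtain ⟨a, haI, ha0⟩ := Submodule.exists_mem_ne_zero_of_ne_bot hIne
  have ha : a ∉ Module.annihilator R V := by
    rwa [annihilator_eq_bot ℛ 𝒱 hsmul hsimple hRV, Ideal.mem_bot]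
  obtain ⟨h, w, hw, haw⟩ := exists_mem_smul_ne_zero_of_notMem_annihilator 𝒱 ha
  have hinj : ∀ x ∈ I, x • w = 0 → x = 0 :=
    eq_zero_of_smul_eq_zero_of_isMinimal ℛ 𝒱 hsmul hI
      (fun J hJ => hImin J ((AddSubgroup.isHomogeneous_iff_eq_iSup_inf ℛ).mp hJ)) hw haI haw
  have hsurj : I.map (LinearMap.toSpanSingleton R V w) = ⊤ :=
    map_toSpanSingleton_eq_top ℛ 𝒱 hsmul
      (fun U hU => hVsimple U ((AddSubgroup.isHomogeneous_iff_eq_iSup_inf 𝒱).mp hU)) hI hw haI haw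
  let e : I ≃ₗ[R] V := .ofBijective ((LinearMap.toSpanSingleton R V w).domRestrict I)
    ⟨(injective_iff_map_eq_zero _).mpr fun x hx => Subtype.ext (hinj x x.2 hx),
      LinearMap.range_eq_top.mp (by rw [LinearMap.range_domRestrict, hsurj])⟩
  refine ⟨h, e.symm, fun k v hv => mem_of_smul_mem ℛ 𝒱 hsmul hw hI hinj (e.symm v).2 ?_⟩
  rwa [← e.apply_symm_apply v] at hv

/-- If `R` is a graded simple algebra (`R² ≠ 0` and the only homogeneous
two-sided ideals are `0` and `R`) with a minimal graded left ideal `I`, then every graded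
simple left `R`-module is isomorphic, as a graded module, to a shift `I^{[g]}` of `I`. -/
theorem graded_simple_module_iso_shift_of_minimal_ideal
    {G : Type*} [Group G] [DecidableEq G] {R : Type*} [Ring R]
    (ℛ : G → AddSubgroup R) [DirectSum.Decomposition ℛ]
    (hmul : ∀ (g h : G) (a b : R), a ∈ ℛ g → b ∈ ℛ h → a * b ∈ ℛ (g * h))
    -- R is graded simple: R² ≠ 0 ...
    (hR2 : ∃ a b : R, a * b ≠ 0)
    -- ... and the only homogeneous two-sided ideals are 0 and R
    (hsimple : ∀ S : AddSubgroup R, (∀ r x, x ∈ S → r * x ∈ S) → (∀ r x, x ∈ S → x * r ∈ S) →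
      S = ⨆ g : G, (S ⊓ ℛ g) → S = ⊥ ∨ S = ⊤)
    -- I is a minimal graded left ideal
    (I : Submodule R R)
    (hIhom : I.toAddSubgroup = ⨆ g : G, (I.toAddSubgroup ⊓ ℛ g))
    (hIne : I ≠ ⊥)
    (hImin : ∀ J : Submodule R R, J.toAddSubgroup = ⨆ g : G, (J.toAddSubgroup ⊓ ℛ g) →
      J ≤ I → J = ⊥ ∨ J = I)
    -- V is a graded left R-module
    {V : Type*} [AddCommGroup V] [Module R V]
    (𝒱 : G → AddSubgroup V) [DirectSum.Decomposition 𝒱]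
    (hsmul : ∀ (g h : G) (r : R) (v : V), r ∈ ℛ g → v ∈ 𝒱 h → r • v ∈ 𝒱 (g * h))
    -- V is graded simple: RV ≠ 0 and no proper nonzero graded submodules
    (hRV : ∃ (r : R) (v : V), r • v ≠ 0)
    (hVsimple : ∀ U : Submodule R V, U.toAddSubgroup = ⨆ g : G, (U.toAddSubgroup ⊓ 𝒱 g) →
      U = ⊥ ∨ U = ⊤) :
    -- conclusion: V ≅ I^{[g]} as graded R-modules for some g
    ∃ (g : G) (φ : V ≃ₗ[R] I),
      ∀ (k : G) (v : V), v ∈ 𝒱 k → (φ v : R) ∈ ℛ (k * g⁻¹) :=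
  graded_simple_module_iso_shift_of_minimal_ideal_general ℛ hsimple I hIhom hIne hImin 𝒱 hsmul hRV
    hVsimple
end
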